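/- Let α > −1 be real and j ≥ 1 an integer. There exist real polynomials P̃ and Q̃ (depending on j and α) such that P̃ has degree at most 2j−1 and only odd-degree terms, Q̃ has degree at most 2j−2 and only even-degree terms, and for all z > 0: z^{2j} · J_α^{(2j)}(z) = P̃(z) · J_{α+1}(z) + ( (−1)^j · z^{2j} + Q̃(z) ) · J_α(z), where J_α^{(m)} denotes the m-th derivative of J_α on (0,∞). -/

import Mathlib

/-!
Write `J_ν(x) = (x/2)^ν S_ν((x/2)²)`, where `S_ν(w) = Σ (-1)^k w^k / (k! Γ(k+ν+1))` is an
entire power series with `S_ν' = -S_{ν+1}` and `S_ν + w S_{ν+2} = (ν+1) S_{ν+1}`. These give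
the classical relations `J_ν' = (ν/x) J_ν - J_{ν+1}` and
`J_ν + J_{ν+2} = (2(ν+1)/x) J_{ν+1}`, hence `J_{ν+1}' = J_ν - ((ν+1)/x) J_{ν+1}`. Since
`z^{m+1} f^{(m+1)} = z (z^m f^{(m)})' - m z^m f^{(m)}`, induction gives
`z^m J_α^{(m)} = A_m J_{α+1} + B_m J_α` with `A_m` odd, `B_m` even, both of degree at most `m`;
the coefficients of `z^m` in `(A_m, B_m)` evolve by `(a, b) ↦ (-b, a)`, so the top term of
`B_{2j}` is `(-1)^j z^{2j}`.
-/

/-- The Bessel function of the first kind, for `x > 0`,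
`J_α(x) = Σ_{k=0}^∞ (-1)^k (x/2)^{2k+α} / (k! Γ(k+α+1))`. -/
noncomputable def besselJ (α x : ℝ) : ℝ :=
  ∑' k : ℕ, (-1 : ℝ) ^ k * (x / 2) ^ (2 * (k : ℝ) + α) /
    ((Nat.factorial k : ℝ) * Real.Gamma ((k : ℝ) + α + 1))

open Filter Polynomial Real

section PowerSeries

variable {a : ℕ → ℝ}

theorem hasDerivAt_tsum_mul_pow {w : ℝ} (ha : Summable fun k => a k * w ^ k)
    (ha' : ∀ r, Summable fun k => |(k + 1) * a (k + 1)| * r ^ k) :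
    HasDerivAt (fun x => ∑' k, a k * x ^ k) (∑' k, (k + 1) * a (k + 1) * w ^ k) w := by
  set R := |w| + 1
  have hu : Summable fun n => |n * a n| * R ^ (n - 1) := by
    rw [← summable_nat_add_iff 1]
    simpa using ha' R
  have hbound : ∀ n y, y ∈ Set.Ioo (-R) R →
      ‖a n * (n * y ^ (n - 1))‖ ≤ |n * a n| * R ^ (n - 1) := by
    intro n y hy
    have hnorm : ‖a n * (n * y ^ (n - 1))‖ = |n * a n| * |y| ^ (n - 1) := by
      rw [Real.norm_eq_abs, abs_mul, abs_mul, abs_mul, abs_pow]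
      ring
    rw [hnorm]
    gcongr
    exact (abs_lt.mpr hy).le
  have hw : w ∈ Set.Ioo (-R) R := abs_lt.mp (by linarith)
  have hderiv := hasDerivAt_tsum_of_isPreconnected hu isOpen_Ioo isPreconnected_Ioo
    (fun n y _ => (hasDerivAt_pow n y).const_mul (a n)) hbound hw ha hw
  refine hderiv.congr_deriv ?_
  rw [Summable.tsum_eq_zero_add (.of_norm_bounded hu fun n => hbound n w hw)]
  simp only [CharP.cast_eq_zero, zero_mul, mul_zero, zero_add, Nat.cast_add, Nat.cast_one,
    add_tsub_cancel_right]
  exact tsum_congr fun k => by ring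

theorem tsum_nat_mul_mul_pow {w : ℝ} (ha : Summable fun k => (k + 1) * a (k + 1) * w ^ k) :
    ∑' k, k * a k * w ^ k = w * ∑' k, (k + 1) * a (k + 1) * w ^ k := by
  rw [tsum_eq_zero_add' ?_, ← tsum_mul_left]
  · simp only [CharP.cast_eq_zero, zero_mul, Nat.cast_add, Nat.cast_one, zero_add]
    exact tsum_congr fun k => by ring
  · simpa [pow_succ, mul_comm, mul_left_comm, mul_assoc] using ha.mul_left w

end PowerSeries

theorem pow_succ_mul_deriv_eq {f F : ℝ → ℝ} {F' z : ℝ} {m : ℕ} (hz : 0 < z)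
    (hf : ∀ x, 0 < x → x ^ m * f x = F x) (hF : HasDerivAt F F' z) :
    z ^ (m + 1) * deriv f z = z * F' - m * F z := by
  have hf' : (fun x => F x / x ^ m) =ᶠ[nhds z] f :=
    eventually_of_mem (Ioi_mem_nhds hz) fun x hx => by
      simp only [← hf x hx, mul_div_cancel_left₀ _ (pow_ne_zero m (Set.mem_Ioi.mp hx).ne')]
  rw [((hF.div (hasDerivAt_pow m z) (pow_ne_zero m hz.ne')).congr_of_eventuallyEq hf'.symm).deriv]
  rcases m with _ | m
  · simp
  · simp only [add_tsub_cancel_right, Nat.cast_succ]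
    field_simp
    ring

theorem coeff_X_mul_derivative {R : Type*} [Semiring R] (p : R[X]) (k : ℕ) :
    (X * derivative p).coeff k = k * p.coeff k := by
  rcases k with _ | k
  · simp
  · rw [coeff_X_mul, coeff_derivative, ← Nat.cast_succ, Nat.cast_comm]

noncomputable def besselCoeff (ν : ℝ) (k : ℕ) : ℝ :=
  (-1) ^ k / (k.factorial * Gamma (k + ν + 1))

noncomputable def besselSeries (ν w : ℝ) : ℝ :=
  ∑' k, besselCoeff ν k * w ^ k

theorem succ_mul_besselCoeff_succ (ν : ℝ) (k : ℕ) :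
    (k + 1) * besselCoeff ν (k + 1) = -besselCoeff (ν + 1) k := by
  have hk : (k : ℝ) + 1 ≠ 0 := by positivity
  simp only [besselCoeff, Nat.factorial_succ, Nat.cast_mul, Nat.cast_succ, pow_succ]
  rw [show (k : ℝ) + 1 + ν + 1 = k + (ν + 1) + 1 by ring]
  field_simp

theorem besselCoeff_eq_mul_besselCoeff_add_one {ν : ℝ} (hν : -1 < ν) (k : ℕ) :
    besselCoeff ν k = (k + ν + 1) * besselCoeff (ν + 1) k := by
  have hpos : 0 < (k : ℝ) + ν + 1 := by linarith [k.cast_nonneg (α := ℝ)]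
  simp only [besselCoeff]
  rw [show (k : ℝ) + (ν + 1) + 1 = k + ν + 1 + 1 by ring, Gamma_add_one hpos.ne']
  field_simp

theorem summable_abs_besselCoeff_mul_pow {ν : ℝ} (hν : -1 < ν) (r : ℝ) :
    Summable fun k => |besselCoeff ν k| * r ^ k := by
  obtain ⟨x₀, hx₀, hmin⟩ := exists_isMinOn_Gamma_Ioi
  have hΓ₀ : 0 < Gamma x₀ := Gamma_pos_of_pos (by linarith [hx₀.1])
  refine .of_norm_bounded ((summable_pow_div_factorial |r|).mul_left (Gamma x₀)⁻¹) fun k => ?_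
  have hk : 0 < (k : ℝ) + ν + 1 := by linarith [k.cast_nonneg (α := ℝ)]
  have hΓ : Gamma x₀ ≤ Gamma (k + ν + 1) := hmin (Set.mem_Ioi.mpr hk)
  have hfac : (0 : ℝ) < k.factorial := by positivity
  rw [norm_mul, norm_pow, Real.norm_eq_abs, Real.norm_eq_abs, abs_abs, besselCoeff, abs_div,
    abs_pow, abs_neg, abs_one, one_pow, abs_of_pos (by positivity)]
  rw [div_mul_eq_mul_div, one_mul, inv_mul_eq_div, div_div]
  gcongr

theorem summable_besselCoeff_mul_pow {ν : ℝ} (hν : -1 < ν) (w : ℝ) :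
    Summable fun k => besselCoeff ν k * w ^ k :=
  .of_norm (by simpa [abs_mul] using summable_abs_besselCoeff_mul_pow hν |w|)

theorem hasDerivAt_besselSeries {ν : ℝ} (hν : -1 < ν) (w : ℝ) :
    HasDerivAt (besselSeries ν) (-besselSeries (ν + 1) w) w := by
  have hν' : -1 < ν + 1 := by linarith
  have h := hasDerivAt_tsum_mul_pow (summable_besselCoeff_mul_pow hν w) fun r => by
    simpa [succ_mul_besselCoeff_succ] using summable_abs_besselCoeff_mul_pow hν' r
  simp only [succ_mul_besselCoeff_succ, neg_mul, tsum_neg] at h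
  exact h

theorem besselSeries_add_mul_besselSeries_add_two {ν : ℝ} (hν : -1 < ν) (w : ℝ) :
    besselSeries ν w + w * besselSeries (ν + 2) w = (ν + 1) * besselSeries (ν + 1) w := by
  have hν' : -1 < ν + 1 := by linarith
  have hshift : ∑' k, k * besselCoeff (ν + 1) k * w ^ k = -(w * besselSeries (ν + 2) w) := by
    rw [tsum_nat_mul_mul_pow]
    · simp [succ_mul_besselCoeff_succ, besselSeries, tsum_neg, add_assoc, one_add_one_eq_two]
    · simpa [succ_mul_besselCoeff_succ] using
        (summable_besselCoeff_mul_pow (show -1 < ν + 1 + 1 by linarith) w).neg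
  have hsplit : besselSeries ν w - (ν + 1) * besselSeries (ν + 1) w =
      ∑' k, k * besselCoeff (ν + 1) k * w ^ k := by
    rw [besselSeries, besselSeries, ← tsum_mul_left, ← Summable.tsum_sub
      (summable_besselCoeff_mul_pow hν w) ((summable_besselCoeff_mul_pow hν' w).mul_left _)]
    refine tsum_congr fun k => ?_
    rw [besselCoeff_eq_mul_besselCoeff_add_one hν]
    ring
  linear_combination hsplit + hshift

theorem besselJ_eq_rpow_mul_besselSeries (ν : ℝ) {x : ℝ} (hx : 0 < x) :
    besselJ ν x = (x / 2) ^ ν * besselSeries ν ((x / 2) ^ 2) := by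
  rw [besselJ, besselSeries, ← tsum_mul_left]
  refine tsum_congr fun k => ?_
  rw [rpow_add (by positivity), show 2 * (k : ℝ) = ((2 * k : ℕ) : ℝ) by push_cast; ring,
    rpow_natCast, pow_mul, besselCoeff]
  ring

theorem besselJ_add_besselJ_add_two {ν : ℝ} (hν : -1 < ν) {x : ℝ} (hx : 0 < x) :
    besselJ ν x + besselJ (ν + 2) x = 2 * (ν + 1) / x * besselJ (ν + 1) x := by
  rw [besselJ_eq_rpow_mul_besselSeries _ hx, besselJ_eq_rpow_mul_besselSeries _ hx,
    besselJ_eq_rpow_mul_besselSeries _ hx, rpow_add_one (by positivity), rpow_add (by positivity),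
    rpow_two]
  have hx' : 2 * (ν + 1) / x * (x / 2) = ν + 1 := by field_simp
  linear_combination (x / 2) ^ ν * besselSeries_add_mul_besselSeries_add_two hν ((x / 2) ^ 2) -
    (x / 2) ^ ν * besselSeries (ν + 1) ((x / 2) ^ 2) * hx'

theorem hasDerivAt_besselJ {ν : ℝ} (hν : -1 < ν) {x : ℝ} (hx : 0 < x) :
    HasDerivAt (besselJ ν) (ν / x * besselJ ν x - besselJ (ν + 1) x) x := by
  have hx2 : x / 2 ≠ 0 := by positivity
  have hJ : (fun y => (y / 2) ^ ν * besselSeries ν ((y / 2) ^ 2)) =ᶠ[nhds x] besselJ ν :=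
    eventually_of_mem (Ioi_mem_nhds hx) fun y hy => (besselJ_eq_rpow_mul_besselSeries ν hy).symm
  have hhalf : HasDerivAt (fun y : ℝ => y / 2) (1 / 2) x := (hasDerivAt_id x).div_const 2
  have hpow := hhalf.rpow_const (p := ν) (Or.inl hx2)
  have hseries := (hasDerivAt_besselSeries hν ((x / 2) ^ 2)).comp x (hhalf.pow 2)
  refine ((hpow.mul hseries).congr_of_eventuallyEq hJ.symm).congr_deriv ?_
  simp only [Function.comp_apply, Pi.pow_apply]
  rw [besselJ_eq_rpow_mul_besselSeries _ hx, besselJ_eq_rpow_mul_besselSeries _ hx,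
    rpow_sub_one hx2, rpow_add_one hx2]
  field_simp
  ring

theorem hasDerivAt_besselJ_add_one {ν : ℝ} (hν : -1 < ν) {x : ℝ} (hx : 0 < x) :
    HasDerivAt (besselJ (ν + 1)) (besselJ ν x - (ν + 1) / x * besselJ (ν + 1) x) x := by
  refine (hasDerivAt_besselJ (by linarith) hx).congr_deriv ?_
  rw [show ν + 1 + 1 = ν + 2 by ring]
  linear_combination -besselJ_add_besselJ_add_two hν hx

noncomputable def besselStep (α : ℝ) (m : ℕ) (p : ℝ[X] × ℝ[X]) : ℝ[X] × ℝ[X] :=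
  (X * derivative p.1 - C (α + 1 + m) * p.1 - X * p.2,
    X * p.1 + X * derivative p.2 + C (α - m) * p.2)

noncomputable def besselPoly (α : ℝ) : ℕ → ℝ[X] × ℝ[X]
  | 0 => (0, 1)
  | m + 1 => besselStep α m (besselPoly α m)

theorem pow_mul_iteratedDeriv_besselJ {α : ℝ} (hα : -1 < α) (m : ℕ) {z : ℝ} (hz : 0 < z) :
    z ^ m * iteratedDeriv m (besselJ α) z =
      (besselPoly α m).1.eval z * besselJ (α + 1) z +
        (besselPoly α m).2.eval z * besselJ α z := by
  induction m generalizing z with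
  | zero => simp [besselPoly]
  | succ m ih =>
    set A := (besselPoly α m).1
    set B := (besselPoly α m).2
    have hF := ((A.hasDerivAt z).mul (hasDerivAt_besselJ_add_one hα hz)).add
      ((B.hasDerivAt z).mul (hasDerivAt_besselJ hα hz))
    rw [iteratedDeriv_succ, pow_succ_mul_deriv_eq hz (fun x hx => ih hx) hF]
    simp only [besselPoly, besselStep, eval_add, eval_sub, eval_mul, eval_X, eval_C]
    field_simp
    ring

section BesselPoly

variable (α : ℝ) (m : ℕ)

theorem coeff_besselStep_fst (p : ℝ[X] × ℝ[X]) (k : ℕ) :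
    (besselStep α m p).1.coeff k = (k - (α + 1 + m)) * p.1.coeff k - (X * p.2).coeff k := by
  simp only [besselStep, coeff_sub, coeff_X_mul_derivative, coeff_C_mul]
  ring

theorem coeff_besselStep_snd (p : ℝ[X] × ℝ[X]) (k : ℕ) :
    (besselStep α m p).2.coeff k = (X * p.1).coeff k + (k + α - m) * p.2.coeff k := by
  simp only [besselStep, coeff_add, coeff_X_mul_derivative, coeff_C_mul]
  ring

theorem coeff_besselPoly_eq_zero (k : ℕ) :
    ((Even k ∨ m < k) → (besselPoly α m).1.coeff k = 0) ∧
      ((Odd k ∨ m < k) → (besselPoly α m).2.coeff k = 0) := by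
  induction m generalizing k with
  | zero => rcases k with _ | k <;> simp [besselPoly, coeff_one]
  | succ m ih =>
    simp only [besselPoly, coeff_besselStep_fst, coeff_besselStep_snd]
    constructor
    · intro hk
      rw [(ih k).1 (by rcases hk with hk | hk; exacts [.inl hk, .inr (by omega)])]
      rcases k with _ | k
      · simp
      · rw [coeff_X_mul, (ih k).2 (by grind)]
        simp
    · intro hk
      rw [(ih k).2 (by rcases hk with hk | hk; exacts [.inl hk, .inr (by omega)])]
      rcases k with _ | k
      · simp
      · rw [coeff_X_mul, (ih k).1 (by grind)]
        simp

theorem coeff_besselPoly_succ_fst_succ :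
    (besselPoly α (m + 1)).1.coeff (m + 1) = -(besselPoly α m).2.coeff m := by
  rw [besselPoly, coeff_besselStep_fst, coeff_X_mul,
    (coeff_besselPoly_eq_zero α m (m + 1)).1 (.inr m.lt_succ_self)]
  ring

theorem coeff_besselPoly_succ_snd_succ :
    (besselPoly α (m + 1)).2.coeff (m + 1) = (besselPoly α m).1.coeff m := by
  rw [besselPoly, coeff_besselStep_snd, coeff_X_mul,
    (coeff_besselPoly_eq_zero α m (m + 1)).2 (.inr m.lt_succ_self)]
  ring

theorem coeff_besselPoly_two_mul_snd (j : ℕ) :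
    (besselPoly α (2 * j)).2.coeff (2 * j) = (-1) ^ j := by
  induction j with
  | zero => simp [besselPoly]
  | succ j ih =>
    rw [show 2 * (j + 1) = 2 * j + 1 + 1 by ring, coeff_besselPoly_succ_snd_succ,
      coeff_besselPoly_succ_fst_succ, ih, pow_succ]
    ring

end BesselPoly

theorem stmt_10_general (α : ℝ) (hα : -1 < α) (j : ℕ) :
    ∃ P Q : Polynomial ℝ,
      (∀ k : ℕ, P.coeff k ≠ 0 → Odd k ∧ k ≤ 2 * j - 1) ∧
      (∀ k : ℕ, Q.coeff k ≠ 0 → Even k ∧ k ≤ 2 * j - 2) ∧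
      ∀ z : ℝ, 0 < z →
        z ^ (2 * j) * iteratedDeriv (2 * j) (besselJ α) z =
          P.eval z * besselJ (α + 1) z +
            ((-1 : ℝ) ^ j * z ^ (2 * j) + Q.eval z) * besselJ α z := by
  set A := (besselPoly α (2 * j)).1
  set B := (besselPoly α (2 * j)).2
  refine ⟨A, B - C ((-1) ^ j) * X ^ (2 * j), fun k hk => ?_, fun k hk => ?_, fun z hz => ?_⟩
  · have := coeff_besselPoly_eq_zero α (2 * j) k
    grind
  · rw [coeff_sub, coeff_C_mul_X_pow] at hk
    have := coeff_besselPoly_eq_zero α (2 * j) k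
    have := coeff_besselPoly_two_mul_snd α j
    grind
  · rw [pow_mul_iteratedDeriv_besselJ hα _ hz]
    simp only [eval_sub, eval_mul, eval_C, eval_pow, eval_X]
    ring

theorem stmt_10 (α : ℝ) (hα : -1 < α) (j : ℕ) (hj : 1 ≤ j) :
    ∃ P Q : Polynomial ℝ,
      (∀ k : ℕ, P.coeff k ≠ 0 → Odd k ∧ k ≤ 2 * j - 1) ∧
      (∀ k : ℕ, Q.coeff k ≠ 0 → Even k ∧ k ≤ 2 * j - 2) ∧
      ∀ z : ℝ, 0 < z →
        z ^ (2 * j) * iteratedDeriv (2 * j) (besselJ α) z =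
          P.eval z * besselJ (α + 1) z +
            ((-1 : ℝ) ^ j * z ^ (2 * j) + Q.eval z) * besselJ α z :=
  stmt_10_general α hα j
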